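/- The language L_sep is not a boolean combination of Σ₂ subsets of {a,b}^ω. -/

import Mathlib

/-!
Boolean combinations of `Σ₂` sets are `Π₃` (countable intersections of `Σ₂` sets), and `Π₃` is
closed under continuous preimages. On the other hand every `Σ₃` set `⋃ k, ⋂ n, U k n` of Cantor
space reduces continuously to `L_sep`. Call stage `m` a hit for `⋂ n, V n` at `x` when the cylinder
of length `m` around `x` lies in `V c`, where `c` counts the earlier hits; then `x ∈ ⋂ n, V n` iff
there are infinitely many hits. The reduction writes at time `⟨m, k⟩` a block of length `⟨k, 0⟩`
for a hit of `⋂ n, U k n` and a block of a length used at no other time for a miss, so only hits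
can repeat. Finally, a diagonal argument over codes of finite prefixes gives a `Σ₃` subset of
Cantor space that is not `Π₃`.
-/

namespace MaxReg

/-! ### Counter operations and boolean combinations -/

inductive CounterOp (C : Type) where
  | inc (c : C)
  | reset (c : C)
  | output (c : C)
  | maxOp (c d : C)

def applyOp {C : Type} [DecidableEq C] (v : C → ℕ) :
    CounterOp C → (C → ℕ) × Option (C × ℕ)
  | .inc c => (Function.update v c (v c + 1), none)
  | .reset c => (Function.update v c 0, none)
  | .output c => (v, some (c, v c))
  | .maxOp c d => (Function.update v c (max (v c) (v d)), none)

def applyOps {C : Type} [DecidableEq C] :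
    List (CounterOp C) → (C → ℕ) → (C → ℕ) × List (C × ℕ)
  | [], v => (v, [])
  | op :: ops, v =>
      let p := applyOp v op
      let r := applyOps ops p.1
      (r.1, p.2.toList ++ r.2)

/-- Boolean combinations with atoms in `σ` (used for acceptance conditions:
the atom `c` stands for "the sequence of values output on counter `c` is bounded"). -/
inductive BC (σ : Type) where
  | tt
  | atom (a : σ)
  | nt (φ : BC σ)
  | an (φ ψ : BC σ)

def BC.eval {σ : Type} (f : σ → Prop) : BC σ → Prop
  | .tt => True
  | .atom a => f a
  | .nt φ => ¬ φ.eval f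
  | .an φ ψ => φ.eval f ∧ ψ.eval f

/-! ### Deterministic max-automata -/

structure MaxAutomaton (α : Type) where
  Q : Type
  C : Type
  [finQ : Fintype Q]
  [finC : Fintype C]
  [decC : DecidableEq C]
  init : Q
  δ : Q → α → Q × List (CounterOp C)
  acc : BC C

attribute [instance] MaxAutomaton.finQ MaxAutomaton.finC MaxAutomaton.decC

namespace MaxAutomaton

variable {α : Type} (A : MaxAutomaton α)

/-- The state at position `n` of the unique run on `w`, started in state `q`
(at position `0`). -/
def runFrom (q : A.Q) (w : ℕ → α) : ℕ → A.Q
  | 0 => q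
  | n + 1 => (A.δ (runFrom q w n) (w n)).1

/-- Counter values before reading the letter at position `n` (all counters start at `0`). -/
def valsFrom (q : A.Q) (w : ℕ → α) : ℕ → (A.C → ℕ)
  | 0 => fun _ => 0
  | n + 1 => (applyOps (A.δ (A.runFrom q w n) (w n)).2 (valsFrom q w n)).1

/-- The (counter, value) pairs output while reading the letter at position `n`. -/
def outsFrom (q : A.Q) (w : ℕ → α) (n : ℕ) : List (A.C × ℕ) :=
  (applyOps (A.δ (A.runFrom q w n) (w n)).2 (A.valsFrom q w n)).2

/-- "The sequence `ρ_c` of values output on counter `c` is bounded." -/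
def BoundedFrom (q : A.Q) (w : ℕ → α) (c : A.C) : Prop :=
  ∃ B, ∀ n, ∀ p ∈ A.outsFrom q w n, p.1 = c → p.2 ≤ B

def AcceptsFrom (q : A.Q) (w : ℕ → α) : Prop :=
  A.acc.eval (A.BoundedFrom q w)

def Accepts (w : ℕ → α) : Prop := A.AcceptsFrom A.init w

def Lang : Set (ℕ → α) := { w | A.Accepts w }

/-- One step on a configuration (state, counter valuation), for reading finite words. -/
def stepList (p : A.Q × (A.C → ℕ)) (a : α) : A.Q × (A.C → ℕ) :=
  ((A.δ p.1 a).1, (applyOps (A.δ p.1 a).2 p.2).1)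

/-- Configuration (state, counter valuation) reached after reading a finite word
from the initial state with all counters `0`. -/
def readConfig (l : List α) : A.Q × (A.C → ℕ) :=
  l.foldl A.stepList (A.init, fun _ => 0)

end MaxAutomaton

/-! ### Annotating words with sets -/

/-- `w[X]` : extend each letter of `w` with the bit `1` exactly at the positions in `X`. -/
def withSet {α : Type} (w : ℕ → α) (X : Finset ℕ) : ℕ → α × Bool :=
  fun n => (w n, decide (n ∈ X))

/-- `w[X₁,…,Xₙ]` : extend each letter of `w` with a bit vector. -/
def withSets {α : Type} {n : ℕ} (w : ℕ → α) (Xs : Fin n → Finset ℕ) :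
    ℕ → α × (Fin n → Bool) :=
  fun m => (w m, fun i => decide (m ∈ Xs i))

/-- Annotate a finite word with a set of positions. -/
def encodeList {α : Type} (l : List α) (X : Finset ℕ) : List (α × Bool) :=
  l.zipIdx.map (fun p => (p.1, decide (p.2 ∈ X)))

/-- `UL` : the words `w` such that `w[X] ∈ L` for arbitrarily large finite sets `X`. -/
def UL {α : Type} (L : Set (ℕ → α × Bool)) : Set (ℕ → α) :=
  { w | ∀ n : ℕ, ∃ X : Finset ℕ, n ≤ X.card ∧ withSet w X ∈ L }

/-- `max(q, l)` : maximal cardinality of a set `X` of positions of `l` such that `A`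
reaches state `q` after reading `l[X]` (and `0` if there is no such set). -/
noncomputable def maxReach {α : Type} (A : MaxAutomaton (α × Bool)) (q : A.Q)
    (l : List α) : ℕ :=
  sSup { k | ∃ X : Finset ℕ, (∀ x ∈ X, x < l.length) ∧ X.card = k ∧
    (A.readConfig (encodeList l X)).1 = q }

def suffixFrom {α : Type} (w : ℕ → α) (n : ℕ) : ℕ → α := fun k => w (n + k)

def prefixList {α : Type} (w : ℕ → α) (n : ℕ) : List α := (List.range n).map w

/-! ### WMSO+U and MSO+U formulas -/

inductive Formula (α : Type) where
  | letter (a : α) (x : ℕ)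
  | mem (x X : ℕ)
  | le (x y : ℕ)
  | not (φ : Formula α)
  | and (φ ψ : Formula α)
  | exFO (x : ℕ) (φ : Formula α)
  | exSO (X : ℕ) (φ : Formula α)
  | U (X : ℕ) (φ : Formula α)

/-- Weak semantics: set variables range over finite sets of positions. -/
def Sat {α : Type} (w : ℕ → α) (v1 : ℕ → ℕ) (v2 : ℕ → Finset ℕ) :
    Formula α → Prop
  | .letter a x => w (v1 x) = a
  | .mem x X => v1 x ∈ v2 X
  | .le x y => v1 x ≤ v1 y
  | .not φ => ¬ Sat w v1 v2 φ
  | .and φ ψ => Sat w v1 v2 φ ∧ Sat w v1 v2 ψ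
  | .exFO x φ => ∃ k : ℕ, Sat w (Function.update v1 x k) v2 φ
  | .exSO X φ => ∃ S : Finset ℕ, Sat w v1 (Function.update v2 X S) φ
  | .U X φ => ∀ n : ℕ, ∃ S : Finset ℕ, n ≤ S.card ∧
      Sat w v1 (Function.update v2 X S) φ

/-- Full semantics: set variables range over arbitrary subsets of ℕ; the
unbounding quantifier still speaks about finite sets. -/
def SatFull {α : Type} (w : ℕ → α) (v1 : ℕ → ℕ) (v2 : ℕ → Set ℕ) :
    Formula α → Prop
  | .letter a x => w (v1 x) = a
  | .mem x X => v1 x ∈ v2 X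
  | .le x y => v1 x ≤ v1 y
  | .not φ => ¬ SatFull w v1 v2 φ
  | .and φ ψ => SatFull w v1 v2 φ ∧ SatFull w v1 v2 ψ
  | .exFO x φ => ∃ k : ℕ, SatFull w (Function.update v1 x k) v2 φ
  | .exSO X φ => ∃ S : Set ℕ, SatFull w v1 (Function.update v2 X S) φ
  | .U X φ => ∀ n : ℕ, ∃ S : Finset ℕ, n ≤ S.card ∧
      SatFull w v1 (Function.update v2 X (↑S : Set ℕ)) φ

def freeFO {α : Type} : Formula α → Finset ℕ
  | .letter _ x => {x}
  | .mem x _ => {x}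
  | .le x y => {x, y}
  | .not φ => freeFO φ
  | .and φ ψ => freeFO φ ∪ freeFO ψ
  | .exFO x φ => freeFO φ \ {x}
  | .exSO _ φ => freeFO φ
  | .U _ φ => freeFO φ

def freeSO {α : Type} : Formula α → Finset ℕ
  | .letter _ _ => ∅
  | .mem _ X => {X}
  | .le _ _ => ∅
  | .not φ => freeSO φ
  | .and φ ψ => freeSO φ ∪ freeSO ψ
  | .exFO _ φ => freeSO φ
  | .exSO X φ => freeSO φ \ {X}
  | .U X φ => freeSO φ \ {X}

def Sentence {α : Type} (φ : Formula α) : Prop :=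
  freeFO φ = ∅ ∧ freeSO φ = ∅

/-- `L` is definable by a sentence of WMSO+U. -/
def DefinableW {α : Type} (L : Set (ℕ → α)) : Prop :=
  ∃ φ : Formula α, Sentence φ ∧
    L = { w | Sat w (fun _ => 0) (fun _ => (∅ : Finset ℕ)) φ }

/-- `L` is definable by a sentence of full MSO+U. -/
def DefinableF {α : Type} (L : Set (ℕ → α)) : Prop :=
  ∃ φ : Formula α, Sentence φ ∧
    L = { w | SatFull w (fun _ => 0) (fun _ => (∅ : Set ℕ)) φ }

/-- `φ` contains no occurrence of the unbounding quantifier. -/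
def UFree {α : Type} : Formula α → Prop
  | .letter _ _ => True
  | .mem _ _ => True
  | .le _ _ => True
  | .not φ => UFree φ
  | .and φ ψ => UFree φ ∧ UFree ψ
  | .exFO _ φ => UFree φ
  | .exSO _ φ => UFree φ
  | .U _ _ => False

/-- Boolean combinations of formulas `U X. φ` with `φ` free of the unbounding
quantifier. -/
inductive IsUNormal {α : Type} : Formula α → Prop
  | base (X : ℕ) (φ : Formula α) : UFree φ → IsUNormal (.U X φ)
  | not {φ : Formula α} : IsUNormal φ → IsUNormal (.not φ)
  | and {φ ψ : Formula α} : IsUNormal φ → IsUNormal ψ →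
      IsUNormal (.and φ ψ)

/-! ### Deterministic Muller automata -/

structure MullerAutomaton (α : Type) where
  Q : Type
  [finQ : Fintype Q]
  init : Q
  δ : Q → α → Q
  F : Set (Set Q)

attribute [instance] MullerAutomaton.finQ

namespace MullerAutomaton

variable {α : Type} (M : MullerAutomaton α)

def run (w : ℕ → α) : ℕ → M.Q
  | 0 => M.init
  | n + 1 => M.δ (run w n) (w n)

/-- States occurring infinitely often in the run on `w`. -/
def InfOcc (w : ℕ → α) : Set M.Q :=
  { q | ∀ n : ℕ, ∃ m, n ≤ m ∧ M.run w m = q }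

def Lang : Set (ℕ → α) := { w | M.InfOcc w ∈ M.F }

end MullerAutomaton

/-! ### Partial runs, convergence, spanning sets -/

section PartialRuns

variable {Q α : Type}

/-- State at position `n + k` of the run seeded at configuration `(q, n)`. -/
def runSeed (δ : Q → α → Q) (w : ℕ → α) (q : Q) (n : ℕ) : ℕ → Q
  | 0 => q
  | k + 1 => δ (runSeed δ w q n k) (w (n + k))

/-- The partial run seeded at configuration `(q, n)`. -/
def seeded (δ : Q → α → Q) (w : ℕ → α) (q : Q) (n : ℕ) : ℕ → Option Q :=
  fun m => if _h : n ≤ m then some (runSeed δ w q n (m - n)) else none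

/-- A partial run over `w`: either the nowhere-defined run or a seeded run. -/
def IsPartialRun (δ : Q → α → Q) (w : ℕ → α) (ρ : ℕ → Option Q) : Prop :=
  ρ = (fun _ => none) ∨ ∃ q n, ρ = seeded δ w q n

/-- Two partial runs converge if they agree from some position on. -/
def Converge (ρ₁ ρ₂ : ℕ → Option Q) : Prop :=
  ∃ N : ℕ, ∀ m, N ≤ m → ρ₁ m = ρ₂ m

/-- A set of partial runs spans `w` if every partial run over `w` converges with
some member of the set. -/
def Spans (δ : Q → α → Q) (w : ℕ → α) (S : Set (ℕ → Option Q)) : Prop :=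
  ∀ ρ, IsPartialRun δ w ρ → ∃ ρ' ∈ S, Converge ρ ρ'

end PartialRuns

/-! ### Deterministic letter-to-letter transducers -/

structure Transducer (α β : Type) where
  Q : Type
  [finQ : Fintype Q]
  init : Q
  δ : Q → α → Q
  out : Q → α → β

attribute [instance] Transducer.finQ

namespace Transducer

variable {α β : Type} (T : Transducer α β)

def run (w : ℕ → α) : ℕ → T.Q
  | 0 => T.init
  | n + 1 => T.δ (run w n) (w n)

/-- The function `Σ^ω → Γ^ω` computed by the transducer. -/
def f (w : ℕ → α) : ℕ → β := fun n => T.out (T.run w n) (w n)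

end Transducer

open Classical in
/-- Decode a word over `Q × {0,1}` as a partial run: position `m` is defined (with the
state recorded at `m`) iff all markers from position `m` on are `1`. -/
noncomputable def decode {Q : Type} (u : ℕ → Q × Bool) : ℕ → Option Q :=
  fun m => if (∀ j, m ≤ j → (u j).2 = true) then some (u m).1 else none

/-! ### Guarded max-automata -/

inductive GOp (C α : Type) where
  | inc (c : C)
  | reset (c : C)
  | output (c : C)
  | maxOp (c d : C)
  /-- `if G then output c` : output the value of `c` only if the suffix of the input
  beginning at the next position belongs to `G`. -/
  | goutput (G : Set (ℕ → α)) (c : C)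

open Classical in
noncomputable def applyGOp {C α : Type} [DecidableEq C] (suffix : ℕ → α)
    (v : C → ℕ) : GOp C α → (C → ℕ) × Option (C × ℕ)
  | .inc c => (Function.update v c (v c + 1), none)
  | .reset c => (Function.update v c 0, none)
  | .output c => (v, some (c, v c))
  | .maxOp c d => (Function.update v c (max (v c) (v d)), none)
  | .goutput G c => (v, if suffix ∈ G then some (c, v c) else none)

noncomputable def applyGOps {C α : Type} [DecidableEq C] (suffix : ℕ → α) :
    List (GOp C α) → (C → ℕ) → (C → ℕ) × List (C × ℕ)
  | [], v => (v, [])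
  | op :: ops, v =>
      let p := applyGOp suffix v op
      let r := applyGOps suffix ops p.1
      (r.1, p.2.toList ++ r.2)

def GOp.WF {C α : Type} : GOp C α → Prop
  | .goutput G _ => ∃ A : MaxAutomaton α, A.Lang = G
  | _ => True

structure GuardedMaxAutomaton (α : Type) where
  Q : Type
  C : Type
  [finQ : Fintype Q]
  [finC : Fintype C]
  [decC : DecidableEq C]
  init : Q
  δ : Q → α → Q × List (GOp C α)
  acc : BC C

attribute [instance] GuardedMaxAutomaton.finQ GuardedMaxAutomaton.finC
  GuardedMaxAutomaton.decC

namespace GuardedMaxAutomaton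

variable {α : Type} (B : GuardedMaxAutomaton α)

/-- All guards used by the automaton are languages recognized by deterministic
max-automata. -/
def WF : Prop := ∀ q a, ∀ op ∈ (B.δ q a).2, op.WF

def run (w : ℕ → α) : ℕ → B.Q
  | 0 => B.init
  | n + 1 => (B.δ (run w n) (w n)).1

noncomputable def vals (w : ℕ → α) : ℕ → (B.C → ℕ)
  | 0 => fun _ => 0
  | n + 1 =>
      (applyGOps (suffixFrom w (n + 1)) (B.δ (B.run w n) (w n)).2 (vals w n)).1

noncomputable def outs (w : ℕ → α) (n : ℕ) : List (B.C × ℕ) :=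
  (applyGOps (suffixFrom w (n + 1)) (B.δ (B.run w n) (w n)).2 (B.vals w n)).2

def Bounded (w : ℕ → α) (c : B.C) : Prop :=
  ∃ Bd, ∀ n, ∀ p ∈ B.outs w n, p.1 = c → p.2 ≤ Bd

def Accepts (w : ℕ → α) : Prop := B.acc.eval (B.Bounded w)

def Lang : Set (ℕ → α) := { w | B.Accepts w }

end GuardedMaxAutomaton

/-! ### Nondeterministic max-automata -/

structure NMaxAutomaton (α : Type) where
  Q : Type
  C : Type
  [finQ : Fintype Q]
  [finC : Fintype C]
  [decC : DecidableEq C]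
  init : Q
  δ : Q → α → Set (Q × List (CounterOp C))
  acc : BC C

attribute [instance] NMaxAutomaton.finQ NMaxAutomaton.finC NMaxAutomaton.decC

/-- Counter values along a sequence of counter-operation lists. -/
def nvals {C : Type} [DecidableEq C] (ops : ℕ → List (CounterOp C)) :
    ℕ → (C → ℕ)
  | 0 => fun _ => 0
  | n + 1 => (applyOps (ops n) (nvals ops n)).1

def nouts {C : Type} [DecidableEq C] (ops : ℕ → List (CounterOp C)) (n : ℕ) :
    List (C × ℕ) :=
  (applyOps (ops n) (nvals ops n)).2

namespace NMaxAutomaton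

variable {α : Type} (A : NMaxAutomaton α)

def Accepts (w : ℕ → α) : Prop :=
  ∃ (q : ℕ → A.Q) (ops : ℕ → List (CounterOp A.C)),
    q 0 = A.init ∧
    (∀ n, (q (n + 1), ops n) ∈ A.δ (q n) (w n)) ∧
    A.acc.eval (fun c => ∃ B, ∀ n, ∀ p ∈ nouts ops n, p.1 = c → p.2 ≤ B)

def Lang : Set (ℕ → α) := { w | A.Accepts w }

end NMaxAutomaton

/-! ### The separating language -/

/-- Position of the `k`-th letter `b` in `a^{ns 0} b a^{ns 1} b ⋯` (0-indexed). -/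
def bpos (ns : ℕ → ℕ) (k : ℕ) : ℕ := (∑ i ∈ Finset.range (k + 1), ns i) + k

/-- `L_sep` over the alphabet `{a, b}` (with `a = false`, `b = true`): words
`a^{n₁} b a^{n₂} b ⋯` such that some number appears infinitely often in `n₁, n₂, …`. -/
def Lsep : Set (ℕ → Bool) :=
  { w | ∃ ns : ℕ → ℕ,
      (∀ m, w m = true ↔ ∃ k, bpos ns k = m) ∧
      ∃ v, { i | ns i = v }.Infinite }

/-! ### Topological notions -/

/-- A `Σ₂` set: a countable union of closed sets. -/
def IsSigma2 {X : Type} [TopologicalSpace X] (S : Set X) : Prop :=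
  ∃ F : ℕ → Set X, (∀ n, IsClosed (F n)) ∧ S = ⋃ n, F n

/-- Boolean combinations of `Σ₂` sets. -/
inductive IsBoolCombSigma2 {X : Type} [TopologicalSpace X] : Set X → Prop
  | base {S : Set X} : IsSigma2 S → IsBoolCombSigma2 S
  | compl {S : Set X} : IsBoolCombSigma2 S → IsBoolCombSigma2 Sᶜ
  | inter {S T : Set X} : IsBoolCombSigma2 S → IsBoolCombSigma2 T →
      IsBoolCombSigma2 (S ∩ T)


end MaxReg

open Set

namespace PiNat

variable {E : ℕ → Type*} [∀ n, TopologicalSpace (E n)] [∀ n, DiscreteTopology (E n)]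
  {U : Set (∀ n, E n)} {x : ∀ n, E n}

theorem exists_cylinder_subset_iff (hU : IsOpen U) : (∃ n, cylinder x n ⊆ U) ↔ x ∈ U := by
  refine ⟨fun ⟨n, hn⟩ => hn (self_mem_cylinder x n), fun hx => ?_⟩
  obtain ⟨_, ⟨y, n, rfl⟩, hxy, hyU⟩ :=
    (isTopologicalBasis_cylinders E).exists_subset_of_mem_open hx hU
  exact ⟨n, mem_cylinder_iff_eq.1 hxy ▸ hyU⟩

theorem isOpen_of_forall_exists_cylinder_subset (h : ∀ x ∈ U, ∃ n, cylinder x n ⊆ U) :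
    IsOpen U :=
  isOpen_iff_forall_mem_open.2 fun x hx =>
    let ⟨n, hn⟩ := h x hx
    ⟨_, hn, isOpen_cylinder E x n, self_mem_cylinder x n⟩

theorem continuous_of_forall_exists_cylinder {F : ℕ → Type*} [∀ m, TopologicalSpace (F m)]
    {f : (∀ n, E n) → ∀ m, F m} (h : ∀ x m, ∃ r, ∀ y ∈ cylinder x r, f y m = f x m) :
    Continuous f :=
  continuous_pi fun m => IsLocallyConstant.continuous <|
    (IsLocallyConstant.iff_exists_open _).2 fun x =>
      let ⟨r, hr⟩ := h x m
      ⟨_, isOpen_cylinder E x r, self_mem_cylinder x r, hr⟩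

end PiNat

namespace MaxReg

open PiNat

section BorelClasses

variable {X : Type} [TopologicalSpace X] {S T : Set X}

theorem IsSigma2.union (hS : IsSigma2 S) (hT : IsSigma2 T) : IsSigma2 (S ∪ T) := by
  obtain ⟨F, hF, rfl⟩ := hS
  obtain ⟨G, hG, rfl⟩ := hT
  exact ⟨fun n => F n ∪ G n, fun n => (hF n).union (hG n), (iUnion_union_distrib F G).symm⟩

theorem IsSigma2.inter (hS : IsSigma2 S) (hT : IsSigma2 T) : IsSigma2 (S ∩ T) := by
  obtain ⟨F, hF, rfl⟩ := hS
  obtain ⟨G, hG, rfl⟩ := hT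
  refine ⟨fun n => F n.unpair.1 ∩ G n.unpair.2, fun n => (hF _).inter (hG _), ?_⟩
  rw [iUnion_inter_iUnion, iUnion_unpair (fun i j => F i ∩ G j)]

theorem IsSigma2.preimage {Y : Type} [TopologicalSpace Y] {f : Y → X} (hf : Continuous f)
    (hS : IsSigma2 S) : IsSigma2 (f ⁻¹' S) := by
  obtain ⟨F, hF, rfl⟩ := hS
  exact ⟨fun n => f ⁻¹' F n, fun n => (hF n).preimage hf, preimage_iUnion⟩

theorem _root_.IsOpen.isSigma2 [PerfectlyNormalSpace X] (hS : IsOpen S) : IsSigma2 S := by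
  obtain ⟨G, hG, hGS⟩ := isGδ_iff_eq_iInter_nat.1 hS.isClosed_compl.isGδ
  exact ⟨fun n => (G n)ᶜ, fun n => (hG n).isClosed_compl,
    by rw [← compl_iInter, ← hGS, compl_compl]⟩

def IsPi3 (S : Set X) : Prop :=
  ∃ T : ℕ → Set X, (∀ k, IsSigma2 (T k)) ∧ S = ⋂ k, T k

theorem IsSigma2.isPi3 (hS : IsSigma2 S) : IsPi3 S :=
  ⟨fun _ => S, fun _ => hS, (iInter_const S).symm⟩

theorem IsSigma2.isPi3_compl [PerfectlyNormalSpace X] (hS : IsSigma2 S) : IsPi3 Sᶜ := by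
  obtain ⟨F, hF, rfl⟩ := hS
  exact ⟨fun n => (F n)ᶜ, fun n => (hF n).isOpen_compl.isSigma2, compl_iUnion F⟩

theorem IsPi3.inter (hS : IsPi3 S) (hT : IsPi3 T) : IsPi3 (S ∩ T) := by
  obtain ⟨A, hA, rfl⟩ := hS
  obtain ⟨B, hB, rfl⟩ := hT
  exact ⟨fun k => A k ∩ B k, fun k => (hA k).inter (hB k), (iInter_inter_distrib A B).symm⟩

theorem IsPi3.union (hS : IsPi3 S) (hT : IsPi3 T) : IsPi3 (S ∪ T) := by
  obtain ⟨A, hA, rfl⟩ := hS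
  obtain ⟨B, hB, rfl⟩ := hT
  refine ⟨fun n => A n.unpair.1 ∪ B n.unpair.2, fun n => (hA _).union (hB _), ?_⟩
  rw [iInter_union_iInter, iInter_unpair (fun i j => A i ∪ B j)]

theorem IsPi3.preimage {Y : Type} [TopologicalSpace Y] {f : Y → X} (hf : Continuous f)
    (hS : IsPi3 S) : IsPi3 (f ⁻¹' S) := by
  obtain ⟨A, hA, rfl⟩ := hS
  exact ⟨fun k => f ⁻¹' A k, fun k => (hA k).preimage hf, preimage_iInter⟩

theorem IsBoolCombSigma2.isPi3_and_isPi3_compl [PerfectlyNormalSpace X]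
    (h : IsBoolCombSigma2 S) : IsPi3 S ∧ IsPi3 Sᶜ := by
  induction h with
  | base h => exact ⟨h.isPi3, h.isPi3_compl⟩
  | compl _ ih => exact ⟨ih.2, by rw [compl_compl]; exact ih.1⟩
  | inter _ _ ih₁ ih₂ => exact ⟨ih₁.1.inter ih₂.1, by rw [compl_inter]; exact ih₁.2.union ih₂.2⟩

theorem IsBoolCombSigma2.isPi3 [PerfectlyNormalSpace X] (h : IsBoolCombSigma2 S) : IsPi3 S :=
  h.isPi3_and_isPi3_compl.1

end BorelClasses

section HitCount

variable {E : ℕ → Type*} (V : ℕ → Set (∀ n, E n)) (x : ∀ n, E n)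

open Classical in
noncomputable def hitCount : ℕ → ℕ
  | 0 => 0
  | m + 1 => hitCount m + if cylinder x m ⊆ V (hitCount m) then 1 else 0

def IsHit (m : ℕ) : Prop := cylinder x m ⊆ V (hitCount V x m)

open Classical in
theorem hitCount_eq_count : hitCount V x = Nat.count (IsHit V x) := by
  funext m
  induction m with
  | zero => rfl
  | succ m ih => rw [hitCount, Nat.count_succ, ← ih]; rfl

variable {V x}

theorem hitCount_congr {y : ∀ n, E n} {m : ℕ} (hy : y ∈ cylinder x m) :
    hitCount V y m = hitCount V x m := by
  induction m with
  | zero => rfl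
  | succ m ih =>
    rw [hitCount, hitCount, ih (cylinder_anti x m.le_succ hy),
      mem_cylinder_iff_eq.1 (cylinder_anti x m.le_succ hy)]

theorem isHit_congr {y : ∀ n, E n} {m : ℕ} (hy : y ∈ cylinder x m) :
    IsHit V y m ↔ IsHit V x m := by
  rw [IsHit, IsHit, hitCount_congr hy, mem_cylinder_iff_eq.1 hy]

theorem mem_iInter_iff_infinite_isHit [∀ n, TopologicalSpace (E n)]
    [∀ n, DiscreteTopology (E n)] (hV : ∀ n, IsOpen (V n)) :
    x ∈ ⋂ n, V n ↔ {m | IsHit V x m}.Infinite := by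
  classical
  refine ⟨fun hx hfin => ?_, fun hinf => mem_iInter.2 fun n => ?_⟩
  · obtain ⟨N, hN⟩ : ∃ N, ∀ m ≥ N, ¬ IsHit V x m :=
      let ⟨N, hN⟩ := hfin.bddAbove
      ⟨N + 1, fun m hm hit => by have := hN hit; omega⟩
    have hconst : ∀ m ≥ N, hitCount V x m = hitCount V x N := by
      intro m hm
      induction m, hm using Nat.le_induction with
      | base => rfl
      | succ m hm ih =>
        rw [hitCount_eq_count] at ih ⊢
        rw [Nat.count_succ_eq_count_iff.2 (hN m hm), ih]
    obtain ⟨r, hr⟩ := (exists_cylinder_subset_iff (hV _)).2 (mem_iInter.1 hx (hitCount V x N))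
    apply hN (max N r) (le_max_left N r)
    rw [IsHit, hconst _ (le_max_left N r)]
    exact (cylinder_anti x (le_max_right N r)).trans hr
  · have hit := Nat.nth_mem_of_infinite hinf n
    rw [IsHit, hitCount_eq_count, Nat.count_nth_of_infinite hinf] at hit
    exact hit (self_mem_cylinder x _)

end HitCount

section Reduction

variable {E : ℕ → Type*} (U : ℕ → ℕ → Set (∀ n, E n))

open Classical in
noncomputable def hitCode (x : ∀ n, E n) (t : ℕ) : ℕ :=
  if IsHit (U t.unpair.2) x t.unpair.1 then Nat.pair t.unpair.2 0
  else Nat.pair t.unpair.2 (t.unpair.1 + 1)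

variable {U}

open Classical in
theorem hitCode_pair (x : ∀ n, E n) (m k : ℕ) :
    hitCode U x (Nat.pair m k) =
      if IsHit (U k) x m then Nat.pair k 0 else Nat.pair k (m + 1) := by
  rw [hitCode, Nat.unpair_pair]

theorem exists_infinite_hitCode_iff {x : ∀ n, E n} :
    (∃ v, {t | hitCode U x t = v}.Infinite) ↔ ∃ k, {m | IsHit (U k) x m}.Infinite := by
  constructor
  · rintro ⟨v, hv⟩
    refine ⟨v.unpair.1, ?_⟩
    have hsub : {t | hitCode U x t = v} ⊆
        (fun m => Nat.pair m v.unpair.1) '' {m | IsHit (U v.unpair.1) x m} ∪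
          {Nat.pair (v.unpair.2 - 1) v.unpair.1} := by
      intro t ht
      obtain ⟨m, k, rfl⟩ : ∃ m k, t = Nat.pair m k := ⟨_, _, (Nat.pair_unpair t).symm⟩
      rw [mem_ofPred_eq, hitCode_pair] at ht
      split_ifs at ht with hit <;> subst ht <;> simp [hit]
    exact ((infinite_union.1 (hv.mono hsub)).resolve_right
      (finite_singleton _).not_infinite).of_image _
  · rintro ⟨k, hk⟩
    have hinj : InjOn (fun m => Nat.pair m k) {m | IsHit (U k) x m} :=
      fun m _ m' _ h => (Nat.pair_eq_pair.1 h).1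
    refine ⟨Nat.pair k 0, (hk.image hinj).mono ?_⟩
    rintro _ ⟨m, hit, rfl⟩
    exact (hitCode_pair x m k).trans (if_pos hit)

theorem continuous_hitCode [∀ n, TopologicalSpace (E n)] [∀ n, DiscreteTopology (E n)] :
    Continuous (hitCode U) :=
  continuous_of_forall_exists_cylinder fun x t => ⟨t, fun y hy => by
    rw [hitCode, hitCode, isHit_congr (cylinder_anti x (Nat.unpair_left_le t) hy)]⟩

end Reduction

section BlockWord

open Classical in
noncomputable def blockWord (ns : ℕ → ℕ) : ℕ → Bool := fun m => decide (m ∈ range (bpos ns))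

theorem bpos_succ (ns : ℕ → ℕ) (k : ℕ) : bpos ns (k + 1) = bpos ns k + ns (k + 1) + 1 := by
  rw [bpos, bpos, Finset.sum_range_succ]
  ring

theorem bpos_strictMono (ns : ℕ → ℕ) : StrictMono (bpos ns) :=
  strictMono_nat_of_lt_succ fun k => by rw [bpos_succ]; omega

theorem bpos_injective : Function.Injective bpos := by
  intro ns ns' h
  funext k
  cases k with
  | zero => simpa [bpos] using congrFun h 0
  | succ k =>
    have := congrFun h (k + 1)
    rw [bpos_succ, bpos_succ, congrFun h k] at this
    omega

theorem blockWord_mem_Lsep_iff {ns : ℕ → ℕ} :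
    blockWord ns ∈ Lsep ↔ ∃ v, {i | ns i = v}.Infinite := by
  refine ⟨fun ⟨ns', hns', hv⟩ => ?_, fun hv => ⟨ns, fun m => by simp [blockWord], hv⟩⟩
  have hrange : range (bpos ns) = range (bpos ns') :=
    ext fun m => by simpa [blockWord] using hns' m
  rwa [bpos_injective (((bpos_strictMono ns).range_inj (bpos_strictMono ns')).1 hrange)]

theorem bpos_congr {ns ns' : ℕ → ℕ} {k : ℕ} (h : ns' ∈ cylinder ns (k + 1)) :
    bpos ns' k = bpos ns k := by
  rw [bpos, bpos, Finset.sum_congr rfl fun i hi => h i (Finset.mem_range.1 hi)]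

theorem continuous_blockWord : Continuous blockWord := by
  refine continuous_of_forall_exists_cylinder fun ns m => ⟨m + 1, fun ns' h => ?_⟩
  have key : ∀ {ns ns'}, ns' ∈ cylinder ns (m + 1) →
      m ∈ range (bpos ns') → m ∈ range (bpos ns) := by
    rintro ns ns' h ⟨k, rfl⟩
    have hk : k + 1 ≤ bpos ns' k + 1 := Nat.succ_le_succ (Nat.le_add_left k _)
    exact ⟨k, (bpos_congr (cylinder_anti ns hk h)).symm⟩
  simp only [blockWord, decide_eq_decide]
  exact ⟨key h, key ((mem_cylinder_comm _ _ _).1 h)⟩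

end BlockWord

theorem exists_continuous_preimage_Lsep_eq {E : ℕ → Type*} [∀ n, TopologicalSpace (E n)]
    [∀ n, DiscreteTopology (E n)] {U : ℕ → ℕ → Set (∀ n, E n)} (hU : ∀ k n, IsOpen (U k n)) :
    ∃ f : (∀ n, E n) → ℕ → Bool, Continuous f ∧ f ⁻¹' Lsep = ⋃ k, ⋂ n, U k n := by
  refine ⟨blockWord ∘ hitCode U, continuous_blockWord.comp continuous_hitCode, ?_⟩
  ext x
  simp only [mem_preimage, Function.comp_apply, blockWord_mem_Lsep_iff,
    exists_infinite_hitCode_iff, mem_iUnion, mem_iInter_iff_infinite_isHit (hU _)]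

section Diagonal

open Encodable

def diagOpen (k n : ℕ) : Set (ℕ → Bool) := {x | ∃ m, x (encode (k, n, res x m)) = false}

theorem isOpen_diagOpen (k n : ℕ) : IsOpen (diagOpen k n) := by
  refine isOpen_of_forall_exists_cylinder_subset fun x ⟨m, hm⟩ => ?_
  refine ⟨max m (encode (k, n, res x m) + 1), fun y hy => ⟨m, ?_⟩⟩
  have hres : res y m = res x m := by
    have := cylinder_anti x (le_max_left _ _) hy
    rwa [cylinder_eq_res] at this
  rw [hres, hy _ (lt_of_lt_of_le (Nat.lt_succ_self _) (le_max_right _ _)), hm]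

theorem exists_forall_mem_diagOpen_iff {F : ℕ → ℕ → Set (ℕ → Bool)}
    (hF : ∀ k n, IsClosed (F k n)) : ∃ ε, ∀ k n, ε ∈ diagOpen k n ↔ ε ∉ F k n := by
  classical
  -- at the code of `(k, n, u)`, `ε` records whether the cylinder with prefix `u` meets `F k n`
  let ε : ℕ → Bool := fun j =>
    decide (∃ p : ℕ × ℕ × List Bool, encode p = j ∧ ∃ y ∈ F p.1 p.2.1, res y p.2.2.length = p.2.2)
  have hε : ∀ k n u, ε (encode (k, n, u)) = true ↔ ∃ y ∈ F k n, res y u.length = u := by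
    intro k n u
    simp only [ε, decide_eq_true_iff, encode_inj, exists_eq_left]
  refine ⟨ε, fun k n => ?_⟩
  have hεm : ∀ m, ε (encode (k, n, res ε m)) = false ↔ cylinder ε m ⊆ (F k n)ᶜ := by
    intro m
    rw [← Bool.not_eq_true, hε, res_length, cylinder_eq_res]
    exact ⟨fun h y hy hyF => h ⟨y, hyF, hy⟩, fun h ⟨y, hyF, hy⟩ => h hy hyF⟩
  simp only [diagOpen, mem_ofPred_eq, hεm]
  exact exists_cylinder_subset_iff (hF k n).isOpen_compl

theorem not_isPi3_iUnion_iInter_diagOpen : ¬ IsPi3 (⋃ k, ⋂ n, diagOpen k n) := by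
  rintro ⟨T, hT, hdiag⟩
  choose F hF hFT using hT
  obtain ⟨ε, hε⟩ := exists_forall_mem_diagOpen_iff hF
  have := congrArg (ε ∈ ·) hdiag
  simp only [mem_iUnion, mem_iInter, hε, hFT] at this
  exact iff_not_self (this.to_iff.trans (by simp only [not_exists, not_forall, not_not]))

end Diagonal

/-- The language `L_sep` is not a boolean combination of `Σ₂`
subsets of `{a,b}^ω`. -/
theorem Lsep_not_boolCombSigma2 :
    ¬ IsBoolCombSigma2 Lsep := by
  intro h
  obtain ⟨f, hf, hfL⟩ := exists_continuous_preimage_Lsep_eq isOpen_diagOpen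
  exact not_isPi3_iUnion_iInter_diagOpen (hfL ▸ h.isPi3.preimage hf)

end MaxReg
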